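/- arXiv:2310.16539 — 2 statements merged into one kernel-verified Lean document; each statement's English description precedes it below -/
import Mathlib

section
/- Let Δ ⊂ ℝ² be a lattice polytope with at least two lattice points and define φ(ξ) = (1/2)·log(Σ_{m ∈ Δ∩ℤ²} exp(2⟨m,ξ⟩)). Then the gradient map dφ : ℝ² → ℝ² is a diffeomorphism onto the interior of Δ. -/
open scoped BigOperators RealInnerProductSpace

noncomputable section Stmt0Aux

abbrev E2 := EuclideanSpace ℝ (Fin 2)

/-- The exponential weight `exp (2⟨m, ξ⟩)`. -/
def eW (m ξ : E2) : ℝ := Real.exp (2 * ⟪m, ξ⟫)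

/-- The partition function. -/
def SW (A : Finset E2) (ξ : E2) : ℝ := ∑ m ∈ A, eW m ξ

/-- The softmax (moment) map: the gradient of the potential. -/
def FW (A : Finset E2) (ξ : E2) : E2 := (SW A ξ)⁻¹ • ∑ m ∈ A, eW m ξ • m

/-- The derivative of `FW`. -/
def LW (A : Finset E2) (ξ : E2) : E2 →L[ℝ] E2 :=
  (SW A ξ)⁻¹ • (∑ m ∈ A, (eW m ξ • ((2:ℝ) • innerSL ℝ m)).smulRight m) +
    ((-((SW A ξ) ^ 2)⁻¹) • (∑ m ∈ A, eW m ξ • ((2:ℝ) • innerSL ℝ m))).smulRight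
      (∑ m ∈ A, eW m ξ • m)

lemma eW_pos (m ξ : E2) : 0 < eW m ξ := Real.exp_pos _

lemma SW_pos {A : Finset E2} (hA : A.Nonempty) (ξ : E2) : 0 < SW A ξ :=
  Finset.sum_pos (fun m _ => eW_pos m ξ) hA

lemma hasFDerivAt_eW (m ξ : E2) :
    HasFDerivAt (fun ξ => eW m ξ) (eW m ξ • ((2:ℝ) • innerSL ℝ m)) ξ := by
  have h1 : HasFDerivAt (fun ξ : E2 => 2 * ⟪m, ξ⟫) ((2:ℝ) • innerSL ℝ m) ξ := by
    simpa using ((innerSL ℝ m).hasFDerivAt (x := ξ)).const_mul (2:ℝ)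
  exact h1.exp

lemma hasFDerivAt_SW (A : Finset E2) (ξ : E2) :
    HasFDerivAt (SW A) (∑ m ∈ A, eW m ξ • ((2:ℝ) • innerSL ℝ m)) ξ :=
  HasFDerivAt.fun_sum fun m _ => hasFDerivAt_eW m ξ

lemma hasFDerivAt_FW {A : Finset E2} (hA : A.Nonempty) (ξ : E2) :
    HasFDerivAt (FW A) (LW A ξ) ξ := by
  have hS := (SW_pos hA ξ).ne'
  have hinv : HasFDerivAt (fun ξ => (SW A ξ)⁻¹)
      ((-((SW A ξ) ^ 2)⁻¹) • (∑ m ∈ A, eW m ξ • ((2:ℝ) • innerSL ℝ m))) ξ :=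
    (hasDerivAt_inv hS).comp_hasFDerivAt ξ (hasFDerivAt_SW A ξ)
  have hG : HasFDerivAt (fun ξ => ∑ m ∈ A, eW m ξ • m)
      (∑ m ∈ A, (eW m ξ • ((2:ℝ) • innerSL ℝ m)).smulRight m) ξ :=
    HasFDerivAt.fun_sum fun m _ => (hasFDerivAt_eW m ξ).smul_const m
  exact hinv.smul hG

lemma inner_LW_self {A : Finset E2} (hA : A.Nonempty) (ξ v : E2) :
    ⟪LW A ξ v, v⟫ = 2 * (SW A ξ)⁻¹ *
      ∑ m ∈ A, eW m ξ * (⟪m, v⟫ - (SW A ξ)⁻¹ * ∑ k ∈ A, eW k ξ * ⟪k, v⟫) ^ 2 := by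
  have hS := (SW_pos hA ξ).ne'
  have hlhs : ⟪LW A ξ v, v⟫ =
      (SW A ξ)⁻¹ * ∑ m ∈ A, eW m ξ * (2 * ⟪m, v⟫) * ⟪m, v⟫
        - ((SW A ξ) ^ 2)⁻¹ * (∑ m ∈ A, eW m ξ * (2 * ⟪m, v⟫)) * (∑ m ∈ A, eW m ξ * ⟪m, v⟫) := by
    simp only [LW, ContinuousLinearMap.add_apply, ContinuousLinearMap.smul_apply,
      ContinuousLinearMap.coe_sum', Finset.sum_apply, ContinuousLinearMap.smulRight_apply,
      ContinuousLinearMap.coe_smul', Pi.smul_apply, innerSL_apply_apply]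
    rw [inner_add_left, inner_smul_left, inner_smul_left, sum_inner, sum_inner]
    simp only [inner_smul_left, RCLike.conj_to_real, conj_trivial, smul_eq_mul]
    rw [Finset.mul_sum, Finset.mul_sum]
    rw [← Finset.mul_sum, ← Finset.mul_sum]
    ring
  rw [hlhs]
  have hvar : ∀ m ∈ A, eW m ξ * (⟪m, v⟫ - (SW A ξ)⁻¹ * ∑ k ∈ A, eW k ξ * ⟪k, v⟫) ^ 2
      = eW m ξ * ⟪m, v⟫ ^ 2
        - 2 * ((SW A ξ)⁻¹ * ∑ k ∈ A, eW k ξ * ⟪k, v⟫) * (eW m ξ * ⟪m, v⟫)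
        + ((SW A ξ)⁻¹ * ∑ k ∈ A, eW k ξ * ⟪k, v⟫) ^ 2 * eW m ξ := by
    intro m _; ring
  rw [Finset.sum_congr rfl hvar]
  rw [Finset.sum_add_distrib, Finset.sum_sub_distrib, ← Finset.mul_sum, ← Finset.mul_sum,
    ← SW]
  have h1 : ∀ m ∈ A, eW m ξ * (2 * ⟪m, v⟫) * ⟪m, v⟫ = 2 * (eW m ξ * ⟪m, v⟫ ^ 2) := by
    intro m _; ring
  have h2 : ∀ m ∈ A, eW m ξ * (2 * ⟪m, v⟫) = 2 * (eW m ξ * ⟪m, v⟫) := by intro m _; ring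
  rw [Finset.sum_congr rfl h1, Finset.sum_congr rfl h2, ← Finset.mul_sum, ← Finset.mul_sum]
  field_simp
  ring

lemma eq_zero_of_inner_const {A : Finset E2}
    (hfull : affineSpan ℝ (A : Set E2) = ⊤) {v : E2} {c : ℝ}
    (h : ∀ m ∈ A, ⟪m, v⟫ = c) : v = 0 := by
  have hvs : vectorSpan ℝ (A : Set E2) = ⊤ := by
    rw [← direction_affineSpan, hfull]; exact AffineSubspace.direction_top ℝ _ _
  have hv' : ∀ x ∈ vectorSpan ℝ (A : Set E2), ⟪x, v⟫ = 0 := by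
    rw [vectorSpan_def]
    intro x hx
    induction hx using Submodule.span_induction with
    | mem x hx =>
      obtain ⟨a, ha, b, hb, rfl⟩ := Set.mem_sub.1 hx
      rw [inner_sub_left, h a ha, h b hb, sub_self]
    | zero => simp
    | add x y _ _ hx hy => rw [inner_add_left, hx, hy, add_zero]
    | smul t x _ hx => rw [inner_smul_left, hx, mul_zero]
  have := hv' v (by rw [hvs]; trivial)
  exact inner_self_eq_zero.mp this

lemma LW_bijective {A : Finset E2} (hA : A.Nonempty)
    (hfull : affineSpan ℝ (A : Set E2) = ⊤) (ξ : E2) :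
    Function.Bijective (LW A ξ) := by
  have h0 : ∀ v : E2, LW A ξ v = 0 → v = 0 := by
    intro v hv
    have hq := inner_LW_self hA ξ v
    rw [hv, inner_zero_left] at hq
    have hc : (0:ℝ) < 2 * (SW A ξ)⁻¹ := by
      have := SW_pos hA ξ; positivity
    have hsum : ∑ m ∈ A, eW m ξ *
        (⟪m, v⟫ - (SW A ξ)⁻¹ * ∑ k ∈ A, eW k ξ * ⟪k, v⟫) ^ 2 = 0 := by
      by_contra hne
      have := mul_ne_zero hc.ne' hne
      exact this hq.symm
    have hterm := (Finset.sum_eq_zero_iff_of_nonneg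
      (fun m _ => mul_nonneg (eW_pos m ξ).le (sq_nonneg _))).mp hsum
    apply eq_zero_of_inner_const hfull (c := (SW A ξ)⁻¹ * ∑ k ∈ A, eW k ξ * ⟪k, v⟫)
    intro m hm
    have := hterm m hm
    have h2 : (⟪m, v⟫ - (SW A ξ)⁻¹ * ∑ k ∈ A, eW k ξ * ⟪k, v⟫) ^ 2 = 0 := by
      have he := (eW_pos m ξ).ne'
      exact (mul_eq_zero.mp this).resolve_left he
    have := pow_eq_zero_iff (n := 2) (by norm_num) |>.mp h2
    linarith [this]
  have hinj : Function.Injective (LW A ξ) := by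
    intro a b hab
    have := h0 (a - b) (by rw [map_sub, hab, sub_self])
    rwa [sub_eq_zero] at this
  refine ⟨hinj, ?_⟩
  exact LinearMap.injective_iff_surjective.mp hinj

section Potential

lemma hasGradientAt_phi {A : Finset E2} (hA : A.Nonempty) (ξ : E2) :
    HasGradientAt (fun ξ => (1/2 : ℝ) * Real.log (SW A ξ)) (FW A ξ) ξ := by
  have hS := (SW_pos hA ξ).ne'
  have hd := ((hasFDerivAt_SW A ξ).log hS).const_mul (1/2 : ℝ)
  rw [hasGradientAt_iff_hasFDerivAt]
  convert hd using 1
  · ext; rfl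
  ext v
  simp only [InnerProductSpace.toDual_apply_apply, ContinuousLinearMap.smul_apply,
    ContinuousLinearMap.coe_sum', Finset.sum_apply, ContinuousLinearMap.coe_smul',
    Pi.smul_apply, innerSL_apply_apply, smul_eq_mul]
  rw [FW, inner_smul_left, sum_inner]
  simp only [inner_smul_left, RCLike.conj_to_real, conj_trivial, smul_eq_mul]
  rw [Finset.mul_sum, Finset.mul_sum, Finset.mul_sum]
  exact Finset.sum_congr rfl fun m _ => by ring

lemma phi_lower {A : Finset E2} {m : E2} (hm : m ∈ A) (ξ : E2) :
    ⟪m, ξ⟫ ≤ (1/2 : ℝ) * Real.log (SW A ξ) := by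
  have h1 : eW m ξ ≤ SW A ξ :=
    Finset.single_le_sum (fun k _ => (eW_pos k ξ).le) hm
  have h2 : Real.log (eW m ξ) ≤ Real.log (SW A ξ) :=
    Real.log_le_log (eW_pos m ξ) h1
  rw [eW, Real.log_exp] at h2
  linarith

lemma hasGradientAt_inner_y (y ξ : E2) : HasGradientAt (fun ξ => ⟪y, ξ⟫) y ξ := by
  rw [hasGradientAt_iff_hasFDerivAt]
  have h : InnerProductSpace.toDual ℝ E2 y = innerSL ℝ y := by
    ext v; simp [InnerProductSpace.toDual_apply_apply]
  rw [h]
  exact (innerSL ℝ y).hasFDerivAt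

end Potential

lemma inner_FW (A : Finset E2) (ξ w : E2) :
    ⟪FW A ξ, w⟫ = (SW A ξ)⁻¹ * ∑ m ∈ A, eW m ξ * ⟪m, w⟫ := by
  rw [FW, inner_smul_left, sum_inner]
  simp only [inner_smul_left, RCLike.conj_to_real, conj_trivial, smul_eq_mul]

lemma sum_p_eq_one {A : Finset E2} (hA : A.Nonempty) (ξ : E2) :
    ∑ m ∈ A, eW m ξ / SW A ξ = 1 := by
  rw [← Finset.sum_div, ← SW, div_self (SW_pos hA ξ).ne']

lemma FW_injective {A : Finset E2} (hA : A.Nonempty)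
    (hfull : affineSpan ℝ (A : Set E2) = ⊤) : Function.Injective (FW A) := by
  intro ξ η hFeq
  set p : E2 → ℝ := fun m => eW m ξ / SW A ξ with hp
  set q : E2 → ℝ := fun m => eW m η / SW A η with hq
  have hppos : ∀ m, 0 < p m := fun m => div_pos (eW_pos m ξ) (SW_pos hA ξ)
  have hqpos : ∀ m, 0 < q m := fun m => div_pos (eW_pos m η) (SW_pos hA η)
  have hlogp : ∀ m, Real.log (p m) = 2 * ⟪m, ξ⟫ - Real.log (SW A ξ) := by
    intro m
    rw [hp, Real.log_div (eW_pos m ξ).ne' (SW_pos hA ξ).ne', eW, Real.log_exp]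
  have hlogq : ∀ m, Real.log (q m) = 2 * ⟪m, η⟫ - Real.log (SW A η) := by
    intro m
    rw [hq, Real.log_div (eW_pos m η).ne' (SW_pos hA η).ne', eW, Real.log_exp]
  -- the symmetrized KL divergence vanishes
  have hD : ∑ m ∈ A, (p m - q m) * (Real.log (p m) - Real.log (q m)) = 0 := by
    have hterm : ∀ m ∈ A, (p m - q m) * (Real.log (p m) - Real.log (q m))
        = 2 * (p m * ⟪m, ξ - η⟫) - 2 * (q m * ⟪m, ξ - η⟫)
          - (Real.log (SW A ξ) - Real.log (SW A η)) * (p m - q m) := by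
      intro m _
      rw [hlogp, hlogq, inner_sub_right]
      ring
    rw [Finset.sum_congr rfl hterm, Finset.sum_sub_distrib, Finset.sum_sub_distrib,
      ← Finset.mul_sum, ← Finset.mul_sum, ← Finset.mul_sum]
    have e1 : ∑ m ∈ A, p m * ⟪m, ξ - η⟫ = ⟪FW A ξ, ξ - η⟫ := by
      rw [inner_FW, Finset.mul_sum]
      exact Finset.sum_congr rfl fun m _ => by rw [hp]; ring
    have e2 : ∑ m ∈ A, q m * ⟪m, ξ - η⟫ = ⟪FW A η, ξ - η⟫ := by
      rw [inner_FW, Finset.mul_sum]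
      exact Finset.sum_congr rfl fun m _ => by rw [hq]; ring
    have e3 : ∑ m ∈ A, (p m - q m) = 0 := by
      rw [Finset.sum_sub_distrib]
      simp only [hp, hq, sum_p_eq_one hA, sub_self]
    rw [e1, e2, e3, hFeq, mul_zero, sub_zero, sub_self]
  have hnn : ∀ m ∈ A, 0 ≤ (p m - q m) * (Real.log (p m) - Real.log (q m)) := by
    intro m _
    rcases le_total (p m) (q m) with h | h
    · have h1 := (Real.log_le_log_iff (hppos m) (hqpos m)).mpr h
      nlinarith
    · have h1 := (Real.log_le_log_iff (hqpos m) (hppos m)).mpr h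
      exact mul_nonneg (by linarith) (by linarith)
  have hz := (Finset.sum_eq_zero_iff_of_nonneg hnn).mp hD
  have hpq : ∀ m ∈ A, p m = q m := by
    intro m hm
    by_contra hne
    rcases lt_or_gt_of_ne hne with h | h
    · have h1 : Real.log (p m) < Real.log (q m) := Real.log_lt_log (hppos m) h
      have := hz m hm
      nlinarith
    · have h1 : Real.log (q m) < Real.log (p m) := Real.log_lt_log (hqpos m) h
      have := hz m hm
      nlinarith
  -- hence ⟪m, ξ - η⟫ is constant on A
  have hconst : ∀ m ∈ A, ⟪m, ξ - η⟫ = (Real.log (SW A ξ) - Real.log (SW A η)) / 2 := by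
    intro m hm
    have := congrArg Real.log (hpq m hm)
    rw [hlogp, hlogq] at this
    rw [inner_sub_right]
    linarith
  have := eq_zero_of_inner_const hfull hconst
  rwa [sub_eq_zero] at this

lemma exists_FW_eq {A : Finset E2} (hA : A.Nonempty) {y : E2} {r : ℝ} (hr : 0 < r)
    (hco : ∀ ξ : E2, ξ ≠ 0 → ∃ m ∈ A, ⟪y, ξ⟫ + r / 2 * ‖ξ‖ ≤ ⟪m, ξ⟫) :
    ∃ ξ, FW A ξ = y := by
  set g : E2 → ℝ := fun ξ => (1/2 : ℝ) * Real.log (SW A ξ) - ⟪y, ξ⟫ with hg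
  have hgd : ∀ ξ, HasGradientAt g (FW A ξ - y) ξ := by
    intro ξ
    rw [hasGradientAt_iff_hasFDerivAt, map_sub]
    exact (hasGradientAt_iff_hasFDerivAt.mp (hasGradientAt_phi hA ξ)).sub
      (hasGradientAt_iff_hasFDerivAt.mp (hasGradientAt_inner_y y ξ))
  have hgc : Continuous g := by
    rw [continuous_iff_continuousAt]
    intro ξ
    exact (hasGradientAt_iff_hasFDerivAt.mp (hgd ξ)).differentiableAt.continuousAt
  have hgl : ∀ ξ : E2, ξ ≠ 0 → r / 2 * ‖ξ‖ ≤ g ξ := by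
    intro ξ hξ
    obtain ⟨m, hm, hle⟩ := hco ξ hξ
    have := phi_lower hm ξ
    simp only [hg]
    linarith
  clear_value g
  obtain ⟨R, hRpos, hrR⟩ : ∃ R : ℝ, 0 < R ∧ r / 2 * R = |g 0| + 1 :=
    ⟨2 * (|g 0| + 1) / r, by positivity, by field_simp⟩
  obtain ⟨ξ₀, hmem, hmin⟩ := (isCompact_closedBall (0:E2) R).exists_isMinOn
    ⟨0, by simp [hRpos.le]⟩ hgc.continuousOn
  have hglob : ∀ ξ, g ξ₀ ≤ g ξ := by
    intro ξ
    by_cases h : ξ ∈ Metric.closedBall (0:E2) R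
    · exact hmin h
    · have hn : R < ‖ξ‖ := by
        simpa [Metric.mem_closedBall, dist_zero_right] using h
      have hξ0 : ξ ≠ 0 := by
        intro h0; rw [h0] at hn; simp at hn; linarith
      have h1 := hgl ξ hξ0
      have h2 : r / 2 * R < r / 2 * ‖ξ‖ :=
        mul_lt_mul_of_pos_left hn (by positivity)
      have h3 : g ξ₀ ≤ g 0 := hmin (by simp [hRpos.le])
      have h4 : g 0 ≤ |g 0| := le_abs_self _
      linarith
  have hloc : IsLocalMin g ξ₀ := Filter.Eventually.of_forall hglob
  have h0 := hloc.hasFDerivAt_eq_zero (hasGradientAt_iff_hasFDerivAt.mp (hgd ξ₀))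
  refine ⟨ξ₀, ?_⟩
  have : FW A ξ₀ - y = 0 := by
    apply (InnerProductSpace.toDual ℝ E2).injective
    rw [h0, map_zero]
  rwa [sub_eq_zero] at this

lemma FW_eq_sum_p {A : Finset E2} (ξ : E2) :
    FW A ξ = ∑ m ∈ A, (eW m ξ / SW A ξ) • m := by
  rw [FW, Finset.smul_sum]
  exact Finset.sum_congr rfl fun m _ => by rw [smul_smul, div_eq_inv_mul]

lemma FW_mem_interior {A : Finset E2} (hA : A.Nonempty)
    (hfull : affineSpan ℝ (A : Set E2) = ⊤) (ξ : E2) :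
    FW A ξ ∈ interior (convexHull ℝ (A : Set E2)) := by
  set p : E2 → ℝ := fun m => eW m ξ / SW A ξ with hp
  have hppos : ∀ m, 0 < p m := fun m => div_pos (eW_pos m ξ) (SW_pos hA ξ)
  have hpsum : ∑ m ∈ A, p m = 1 := sum_p_eq_one hA ξ
  obtain ⟨x₀, hx₀⟩ : (interior (convexHull ℝ (A : Set E2))).Nonempty :=
    interior_convexHull_nonempty_iff_affineSpan_eq_top.mpr hfull
  have hx₀hull : x₀ ∈ convexHull ℝ (A : Set E2) := interior_subset hx₀
  rw [Finset.convexHull_eq] at hx₀hull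
  obtain ⟨c, hc0, hc1, hcm⟩ := hx₀hull
  have hcmass : ∑ m ∈ A, c m • m = x₀ := by
    rw [Finset.centerMass_eq_of_sum_1 _ id hc1] at hcm
    simpa using hcm
  set t : ℝ := min (A.inf' hA p) (1/2) with ht
  have htpos : 0 < t := by
    apply lt_min _ (by norm_num)
    exact (Finset.lt_inf'_iff hA).mpr fun m _ => hppos m
  have htlt : t < 1 := lt_of_le_of_lt (min_le_right _ _) (by norm_num)
  have htle : ∀ m ∈ A, t ≤ p m := fun m hm =>
    le_trans (min_le_left _ _) (Finset.inf'_le _ hm)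
  have hcle : ∀ m ∈ A, c m ≤ 1 := by
    intro m hm
    calc c m ≤ ∑ k ∈ A, c k := Finset.single_le_sum hc0 hm
    _ = 1 := hc1
  have hwnn : ∀ m ∈ A, 0 ≤ p m - t * c m := by
    intro m hm
    have : t * c m ≤ t * 1 := mul_le_mul_of_nonneg_left (hcle m hm) htpos.le
    have := htle m hm
    nlinarith [hc0 m hm]
  have h1t : (0:ℝ) < 1 - t := by linarith
  set y : E2 := (1 - t)⁻¹ • (FW A ξ - t • x₀) with hy
  have hyhull : y ∈ convexHull ℝ (A : Set E2) := by
    rw [Finset.convexHull_eq]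
    refine ⟨fun m => (p m - t * c m) / (1 - t), fun m hm => div_nonneg (hwnn m hm) h1t.le, ?_, ?_⟩
    · rw [← Finset.sum_div, Finset.sum_sub_distrib, ← Finset.mul_sum, hpsum, hc1, mul_one,
        div_self h1t.ne']
    · rw [Finset.centerMass_eq_of_sum_1]
      · rw [hy, FW_eq_sum_p, ← hcmass, Finset.smul_sum, ← Finset.sum_sub_distrib,
          Finset.smul_sum]
        refine Finset.sum_congr rfl fun m hm => ?_
        simp only [id_eq, smul_smul, ← sub_smul]
        congr 1
        field_simp [hp]
        rfl
      · rw [← Finset.sum_div, Finset.sum_sub_distrib, ← Finset.mul_sum, hpsum, hc1, mul_one,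
          div_self h1t.ne']
  have hcombo : FW A ξ = t • x₀ + (1 - t) • y := by
    rw [hy, smul_inv_smul₀ h1t.ne']
    abel
  rw [hcombo]
  exact (convex_convexHull ℝ _).combo_interior_self_mem_interior hx₀ hyhull htpos
    (by linarith) (by ring)

lemma contDiff_eW (m : E2) : ContDiff ℝ (⊤ : ℕ∞) (fun ξ => eW m ξ) := by
  apply Real.contDiff_exp.comp
  exact contDiff_const.mul (ContDiff.inner ℝ contDiff_const contDiff_id)

lemma contDiff_FW {A : Finset E2} (hA : A.Nonempty) : ContDiff ℝ (⊤ : ℕ∞) (FW A) := by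
  have hS : ContDiff ℝ (⊤ : ℕ∞) (SW A) := ContDiff.sum fun m _ => contDiff_eW m
  have hG : ContDiff ℝ (⊤ : ℕ∞) (fun ξ => ∑ m ∈ A, eW m ξ • m) :=
    ContDiff.sum fun m _ => (contDiff_eW m).smul contDiff_const
  exact (hS.inv fun ξ => (SW_pos hA ξ).ne').smul hG

end Stmt0Aux

/-- The gradient of the smoothed potential `φ(ξ) = (1/2) log Σ_{m ∈ Δ∩ℤ²} exp(2⟨m,ξ⟩)`
of a full-dimensional lattice polytope `Δ ⊂ ℝ²` with at least two lattice points is a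
diffeomorphism from `ℝ²` onto the interior of `Δ`. -/
theorem stmt_0
    (Δ : Set (EuclideanSpace ℝ (Fin 2)))
    (hΔ : ∃ V : Finset (EuclideanSpace ℝ (Fin 2)),
      (∀ v ∈ V, ∀ i, ∃ z : ℤ, v i = z) ∧ Δ = convexHull ℝ (V : Set (EuclideanSpace ℝ (Fin 2))))
    (A : Finset (EuclideanSpace ℝ (Fin 2)))
    (hA : (A : Set (EuclideanSpace ℝ (Fin 2))) = {x ∈ Δ | ∀ i, ∃ z : ℤ, x i = z})
    (hcard : 2 ≤ A.card)
    (hfull : affineSpan ℝ (A : Set (EuclideanSpace ℝ (Fin 2))) = ⊤)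
    (φ : EuclideanSpace ℝ (Fin 2) → ℝ)
    (hφ : ∀ ξ, φ ξ = (1 / 2) * Real.log (∑ m ∈ A, Real.exp (2 * ⟪m, ξ⟫))) :
    Function.Injective (fun ξ => gradient φ ξ) ∧
    Set.range (fun ξ => gradient φ ξ) = interior Δ ∧
    ContDiff ℝ (⊤ : ℕ∞) (fun ξ => gradient φ ξ) ∧
    ∃ ψ : EuclideanSpace ℝ (Fin 2) → EuclideanSpace ℝ (Fin 2),
      ContDiffOn ℝ (⊤ : ℕ∞) ψ (interior Δ) ∧ ∀ ξ, ψ (gradient φ ξ) = ξ := by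
  have hAne : A.Nonempty := Finset.card_pos.mp (by omega)
  -- Δ is the convex hull of A
  have hΔA : Δ = convexHull ℝ (A : Set E2) := by
    obtain ⟨V, hV, hΔV⟩ := hΔ
    have hVA : (V : Set E2) ⊆ (A : Set E2) := by
      intro v hv
      rw [hA]
      exact ⟨by rw [hΔV]; exact subset_convexHull ℝ _ hv, hV v hv⟩
    have hAΔ : (A : Set E2) ⊆ Δ := by
      rw [hA]; exact fun x hx => hx.1
    refine Set.Subset.antisymm ?_ ?_
    · rw [hΔV]; exact convexHull_mono hVA
    · rw [hΔV]; exact convexHull_min (by rw [← hΔV]; exact hAΔ) (convex_convexHull ℝ _)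
  -- the gradient is the softmax map FW
  have hφ' : φ = fun ξ => (1/2 : ℝ) * Real.log (SW A ξ) := by
    funext ξ; rw [hφ ξ]; rfl
  have hgr : ∀ ξ, gradient φ ξ = FW A ξ := by
    intro ξ
    rw [hφ']
    exact (hasGradientAt_phi hAne ξ).gradient
  have hgrf : (fun ξ => gradient φ ξ) = FW A := funext hgr
  have hinj : Function.Injective (FW A) := FW_injective hAne hfull
  -- the range is the interior of Δ
  have hrange : Set.range (FW A) = interior Δ := by
    apply Set.Subset.antisymm
    · rintro y ⟨ξ, rfl⟩
      rw [hΔA]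
      exact FW_mem_interior hAne hfull ξ
    · intro y hy
      obtain ⟨r, hr, hball⟩ := Metric.isOpen_iff.mp isOpen_interior y hy
      have hco : ∀ ξ : E2, ξ ≠ 0 → ∃ m ∈ A, ⟪y, ξ⟫ + r / 2 * ‖ξ‖ ≤ ⟪m, ξ⟫ := by
        intro ξ hξ
        have hnξ : (0:ℝ) < ‖ξ‖ := norm_pos_iff.mpr hξ
        set z : E2 := y + ((r/2) / ‖ξ‖) • ξ with hz
        have hzball : z ∈ Metric.ball y r := by
          rw [Metric.mem_ball, dist_eq_norm, hz]
          simp only [add_sub_cancel_left, norm_smul]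
          rw [Real.norm_eq_abs, abs_div, abs_of_nonneg (by linarith), abs_of_nonneg hnξ.le]
          rw [div_mul_cancel₀ _ hnξ.ne']
          linarith
        have hzΔ : z ∈ convexHull ℝ (A : Set E2) := by
          rw [← hΔA]
          exact interior_subset (hball hzball)
        have hconvOn : ConvexOn ℝ (convexHull ℝ (A : Set E2)) (fun x => ⟪x, ξ⟫) := by
          refine ⟨convex_convexHull ℝ _, ?_⟩
          intro x _ y' _ a b _ _ _
          simp only [inner_add_left, real_inner_smul_left, smul_eq_mul, le_refl]
        obtain ⟨m, hm, hle⟩ := hconvOn.exists_ge_of_mem_convexHull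
          (subset_convexHull ℝ _) hzΔ
        refine ⟨m, hm, ?_⟩
        have hzin : ⟪z, ξ⟫ = ⟪y, ξ⟫ + r / 2 * ‖ξ‖ := by
          rw [hz, inner_add_left, real_inner_smul_left, real_inner_self_eq_norm_sq]
          congr 1
          field_simp
        rw [← hzin]
        exact hle
      exact exists_FW_eq hAne hr hco
  refine ⟨?_, ?_, ?_, ?_⟩
  · rw [hgrf]; exact hinj
  · rw [hgrf]; exact hrange
  · rw [hgrf]; exact contDiff_FW hAne
  · refine ⟨Function.invFun (FW A), ?_, ?_⟩
    · -- smoothness of the inverse on `interior Δ`, via the inverse function theorem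
      intro y hy
      rw [← hrange] at hy
      obtain ⟨ξ, rfl⟩ := hy
      have hbij := LW_bijective hAne hfull ξ
      let eL : E2 ≃L[ℝ] E2 :=
        (LinearEquiv.ofBijective ((LW A ξ) : E2 →ₗ[ℝ] E2) hbij).toContinuousLinearEquiv
      have hcoe : (eL : E2 →L[ℝ] E2) = LW A ξ := by
        ext v; rfl
      have hfd : HasFDerivAt (FW A) (eL : E2 →L[ℝ] E2) ξ := by
        rw [hcoe]; exact hasFDerivAt_FW hAne ξ
      have hCAt : ContDiffAt ℝ (⊤ : ℕ∞) (FW A) ξ := (contDiff_FW hAne).contDiffAt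
      have hst : HasStrictFDerivAt (FW A) (eL : E2 →L[ℝ] E2) ξ :=
        hCAt.hasStrictFDerivAt' hfd (by simp)
      have hgC : ContDiffAt ℝ (⊤ : ℕ∞) (hst.localInverse (FW A) eL ξ) (FW A ξ) :=
        hCAt.to_localInverse hfd (by simp)
      have hev : ∀ᶠ y' in nhds (FW A ξ), FW A (hst.localInverse (FW A) eL ξ y') = y' :=
        hst.eventually_right_inverse
      have hevmem : ∀ᶠ y' in nhds (FW A ξ), y' ∈ interior Δ :=
        isOpen_interior.eventually_mem (by rw [← hrange]; exact Set.mem_range_self ξ)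
      have heq : Function.invFun (FW A) =ᶠ[nhds (FW A ξ)] hst.localInverse (FW A) eL ξ := by
        filter_upwards [hev, hevmem] with y' h1 h2
        rw [← hrange] at h2
        obtain ⟨ξ', rfl⟩ := h2
        rw [Function.leftInverse_invFun hinj ξ']
        exact (hinj h1).symm
      exact ((hgC.congr_of_eventuallyEq heq).contDiffWithinAt)
    · intro ξ
      rw [hgr]
      exact Function.leftInverse_invFun hinj ξ
end

section
/- Let Δ ⊂ ℝⁿ be a lattice polytope, φ(ξ) = (1/2)·log(Σ_{m ∈ Δ∩ℤⁿ} exp(2⟨m,ξ⟩)), and let v be a vertex of Δ. If ξ₀ ∈ ℝⁿ satisfies ⟨v, ξ₀⟩ > ⟨m, ξ₀⟩ for all lattice points m of Δ with m ≠ v, then dφ(t·ξ₀) → v as t → ∞. -/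
set_option maxHeartbeats 1000000


open scoped BigOperators RealInnerProductSpace

theorem aux_grad (n : ℕ)
    (A : Finset (EuclideanSpace ℝ (Fin n)))
    (φ : EuclideanSpace ℝ (Fin n) → ℝ)
    (hφ : ∀ ξ, φ ξ = (1 / 2) * Real.log (∑ m ∈ A, Real.exp (2 * ⟪m, ξ⟫)))
    (v : EuclideanSpace ℝ (Fin n)) (hv : v ∈ A) (ξ : EuclideanSpace ℝ (Fin n)) :
    HasGradientAt φ (∑ m ∈ A, (Real.exp (2 * ⟪m, ξ⟫) / ∑ m' ∈ A, Real.exp (2 * ⟪m', ξ⟫)) • m) ξ := by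
  set S : EuclideanSpace ℝ (Fin n) → ℝ := fun ξ => ∑ m ∈ A, Real.exp (2 * ⟪m, ξ⟫) with hS
  have hSpos : ∀ ξ, 0 < S ξ := fun ξ =>
    Finset.sum_pos (fun m _ => Real.exp_pos _) ⟨v, hv⟩
  have hderiv : HasFDerivAt S (∑ m ∈ A, (2 * Real.exp (2 * ⟪m, ξ⟫)) • innerSL ℝ m) ξ := by
    apply HasFDerivAt.fun_sum
    intro m _
    have h1 : HasFDerivAt (fun ξ' => ⟪m, ξ'⟫) (innerSL ℝ m) ξ := (innerSL ℝ m).hasFDerivAt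
    have h2 := (h1.const_mul (2:ℝ)).exp
    refine h2.congr_fderiv (Eq.symm ?_)
    ext y
    simp [smul_smul, mul_comm]
  have hlog := hderiv.log (ne_of_gt (hSpos ξ))
  have hphi := hlog.const_mul (1/2 : ℝ)
  have hphi' : HasFDerivAt φ ((1/2 : ℝ) • (S ξ)⁻¹ • (∑ m ∈ A, (2 * Real.exp (2 * ⟪m, ξ⟫)) • innerSL ℝ m)) ξ := by
    rw [show φ = fun y => 1 / 2 * Real.log (S y) from funext hφ]
    exact hphi
  rw [hasGradientAt_iff_hasFDerivAt]
  refine hphi'.congr_fderiv (Eq.symm ?_)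
  ext y
  simp only [InnerProductSpace.toDual_apply_apply, ContinuousLinearMap.smul_apply,
    ContinuousLinearMap.sum_apply, innerSL_apply_apply, smul_eq_mul, Finset.sum_div]
  rw [sum_inner]
  rw [Finset.mul_sum, Finset.mul_sum]
  apply Finset.sum_congr rfl
  intro m _
  rw [real_inner_smul_left]
  simp only [hS, PiLp.inner_apply, RCLike.inner_apply, conj_trivial]
  field_simp

/-- If `v` is a lattice point of the lattice polytope `Δ` at which the linear functional
`⟨·, ξ₀⟩` is strictly maximized over the lattice points of `Δ` (i.e. `v` is a vertex and
`ξ₀` lies in the interior of its normal cone), then `dφ(t ξ₀) → v` as `t → ∞`, where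
`φ(ξ) = (1/2) log Σ_{m ∈ Δ∩ℤⁿ} exp(2⟨m,ξ⟩)`. -/
theorem stmt_2 (n : ℕ)
    (Δ : Set (EuclideanSpace ℝ (Fin n)))
    (hΔ : ∃ V : Finset (EuclideanSpace ℝ (Fin n)),
      (∀ v ∈ V, ∀ i, ∃ z : ℤ, v i = z) ∧ Δ = convexHull ℝ (V : Set (EuclideanSpace ℝ (Fin n))))
    (A : Finset (EuclideanSpace ℝ (Fin n)))
    (hA : (A : Set (EuclideanSpace ℝ (Fin n))) = {x ∈ Δ | ∀ i, ∃ z : ℤ, x i = z})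
    (φ : EuclideanSpace ℝ (Fin n) → ℝ)
    (hφ : ∀ ξ, φ ξ = (1 / 2) * Real.log (∑ m ∈ A, Real.exp (2 * ⟪m, ξ⟫)))
    (v : EuclideanSpace ℝ (Fin n)) (hv : v ∈ A)
    (ξ₀ : EuclideanSpace ℝ (Fin n))
    (hmax : ∀ m ∈ A, m ≠ v → ⟪m, ξ₀⟫ < ⟪v, ξ₀⟫) :
    Filter.Tendsto (fun t : ℝ => gradient φ (t • ξ₀)) Filter.atTop (nhds v) := by
  classical
  set a : EuclideanSpace ℝ (Fin n) → ℝ := fun m => ⟪m, ξ₀⟫ with ha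
  -- rewrite the gradient
  have hgrad : ∀ t : ℝ, gradient φ (t • ξ₀)
      = ∑ m ∈ A, (Real.exp (2 * (t * a m)) / ∑ m' ∈ A, Real.exp (2 * (t * a m'))) • m := by
    intro t
    have := (aux_grad n A φ hφ v hv (t • ξ₀)).gradient
    rw [this]
    apply Finset.sum_congr rfl
    intro m _
    congr 2
    · rw [real_inner_smul_right]
    · apply Finset.sum_congr rfl
      intro m' _
      rw [real_inner_smul_right]
  -- weight limits
  have hweight : ∀ m ∈ A, Filter.Tendsto
      (fun t : ℝ => Real.exp (2 * (t * (a m - a v))))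
      Filter.atTop (nhds (if m = v then 1 else 0)) := by
    intro m hm
    by_cases h : m = v
    · simp [h]
    · simp only [h, if_false]
      have hc : 2 * (a m - a v) < 0 := by
        have := hmax m hm h
        simp only [ha] at *
        linarith
      have : Filter.Tendsto (fun t : ℝ => (2 * (a m - a v)) * t) Filter.atTop Filter.atBot :=
        Filter.Tendsto.const_mul_atTop_of_neg hc Filter.tendsto_id
      have h3 := Real.tendsto_exp_atBot.comp this
      simp only [Function.comp_def] at h3
      convert h3 using 2 with t
      ring
  have hdenom : Filter.Tendsto
      (fun t : ℝ => ∑ m' ∈ A, Real.exp (2 * (t * (a m' - a v))))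
      Filter.atTop (nhds 1) := by
    have h := tendsto_finset_sum A hweight
    convert h using 2
    rw [Finset.sum_ite_eq' A v (fun _ => (1:ℝ))]
    simp [hv]
  -- weights expressed relative to v
  have hkey : ∀ (t : ℝ) (m : EuclideanSpace ℝ (Fin n)),
      Real.exp (2 * (t * a m)) / ∑ m' ∈ A, Real.exp (2 * (t * a m'))
      = Real.exp (2 * (t * (a m - a v))) / ∑ m' ∈ A, Real.exp (2 * (t * (a m' - a v))) := by
    intro t m
    have hx : ∀ m' : EuclideanSpace ℝ (Fin n),
        Real.exp (2 * (t * a m')) = Real.exp (2 * (t * a v)) * Real.exp (2 * (t * (a m' - a v))) := by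
      intro m'
      rw [← Real.exp_add]
      ring_nf
    rw [hx m]
    have : (∑ m' ∈ A, Real.exp (2 * (t * a m')))
        = Real.exp (2 * (t * a v)) * ∑ m' ∈ A, Real.exp (2 * (t * (a m' - a v))) := by
      rw [Finset.mul_sum]
      exact Finset.sum_congr rfl fun m' _ => hx m'
    rw [this, mul_div_mul_left _ _ (Real.exp_ne_zero _)]
  -- combine
  have hfinal : Filter.Tendsto
      (fun t : ℝ => ∑ m ∈ A, (Real.exp (2 * (t * a m)) / ∑ m' ∈ A, Real.exp (2 * (t * a m'))) • m)
      Filter.atTop (nhds (∑ m ∈ A, (if m = v then (1:ℝ) else 0) • m)) := by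
    apply tendsto_finset_sum
    intro m hm
    have hw : Filter.Tendsto
        (fun t : ℝ => Real.exp (2 * (t * a m)) / ∑ m' ∈ A, Real.exp (2 * (t * a m')))
        Filter.atTop (nhds (if m = v then 1 else 0)) := by
      simp only [hkey]
      have := (hweight m hm).div hdenom one_ne_zero
      rw [div_one] at this
      exact this
    exact hw.smul_const m
  have hsum : (∑ m ∈ A, (if m = v then (1:ℝ) else 0) • m) = v := by
    simp only [ite_smul, one_smul, zero_smul]
    rw [Finset.sum_ite_eq' A v (fun m => m)]
    simp [hv]
  rw [hsum] at hfinal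
  simpa only [hgrad] using hfinal
end
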